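/- arXiv:math/0112305 — 7 statements merged into one kernel-verified Lean document; each statement's English description precedes it below -/
import Mathlib

section
/- Let A be a discrete valuation ring with maximal ideal p_A, and let B be a flat A-algebra that is complete with respect to the ideal p_A·B and such that B/p_A·B is a perfect ring of characteristic p. Then for every element x of B/p_A·B there is a unique lift s(x) ∈ B of x such that s(x) admits a p^m-th root in B for every m ≥ 0, and the resulting map s: B/p_A·B → B is multiplicative. -/
/-!
Since `B ⧸ I` is perfect, it is its own perfection, so Mathlib's Teichmüller map
`Perfection (B ⧸ I) p →* B` becomes a multiplicative section `s` of `B → B ⧸ I`: `s x` is the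
`I`-adic limit of `p ^ n`-th powers of lifts of the `p ^ n`-th roots of `x` (these converge
because `p ∈ I`). If a lift `b` of `x` equals `y ^ p ^ n`, then `y` lifts the `p ^ n`-th root
of `x`, so `b ≡ s x` modulo `I ^ (n + 1)`; when this holds for every `n`, `b = s x` because `B`
is `I`-adically separated.
-/

theorem Perfection.coeff_liftMonoidHom_id (p : ℕ) [Fact p.Prime] {S : Type*} [CommRing S]
    [CharP S p] [PerfectRing S p] (x : S) (n : ℕ) :
    coeff S p n (liftMonoidHom p S S (MonoidHom.id S) x) = (powMulEquiv S (p ^ n)).symm x :=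
  rfl

section TeichmullerSection

variable (p : ℕ) [Fact p.Prime] {R : Type*} [CommRing R] (I : Ideal R)
  [CharP (R ⧸ I) p] [PerfectRing (R ⧸ I) p] [IsAdicComplete I R]

noncomputable def teichmullerSection : R ⧸ I →* R :=
  (Perfection.teichmuller p I).comp
    (Perfection.liftMonoidHom p (R ⧸ I) (R ⧸ I) (MonoidHom.id _))

theorem mk_teichmullerSection (x : R ⧸ I) :
    Ideal.Quotient.mk I (teichmullerSection p I x) = x := by
  rw [teichmullerSection, MonoidHom.comp_apply, Perfection.mk_teichmuller,
    Perfection.coeff_liftMonoidHom_id, MulEquiv.symm_apply_eq]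
  exact (pow_one x).symm

theorem exists_pow_eq_teichmullerSection (x : R ⧸ I) (m : ℕ) :
    ∃ y : R, y ^ p ^ m = teichmullerSection p I x :=
  ⟨teichmullerSection p I ((powMulEquiv _ (p ^ m)).symm x), by
    rw [← map_pow, powMulEquiv_symm_pow_p]⟩

variable {p I} in
theorem eq_teichmullerSection_of_forall_exists_pow_eq {x : R ⧸ I} {b : R}
    (hb : Ideal.Quotient.mk I b = x) (hroots : ∀ m : ℕ, ∃ y : R, y ^ p ^ m = b) :
    b = teichmullerSection p I x := by
  refine (Perfection.teichmuller_spec fun n ↦ ?_).symm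
  obtain ⟨y, hy⟩ := hroots n
  refine ⟨y, ?_, by rw [hy]⟩
  rw [Perfection.coeff_liftMonoidHom_id, MulEquiv.eq_symm_apply, ← hb, ← hy]
  exact (map_pow (Ideal.Quotient.mk I) y _).symm

end TeichmullerSection

open IsLocalRing

theorem statement1_general (p : ℕ) [Fact p.Prime]
    (B : Type) [CommRing B]
    (I : Ideal B)
    [IsAdicComplete I B] [CharP (B ⧸ I) p]
    (hperf : Function.Bijective (fun x : B ⧸ I => x ^ p)) :
    ∃ s : B ⧸ I → B,
      (∀ x : B ⧸ I, Ideal.Quotient.mk I (s x) = x) ∧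
      (∀ (x : B ⧸ I) (m : ℕ), ∃ y : B, y ^ p ^ m = s x) ∧
      (∀ x y : B ⧸ I, s (x * y) = s x * s y) ∧
      (∀ (x : B ⧸ I) (b : B),
        Ideal.Quotient.mk I b = x → (∀ m : ℕ, ∃ y : B, y ^ p ^ m = b) → b = s x) := by
  have : PerfectRing (B ⧸ I) p := ⟨hperf⟩
  exact ⟨teichmullerSection p I, mk_teichmullerSection p I,
    exists_pow_eq_teichmullerSection p I, map_mul _,
    fun _ _ ↦ eq_teichmullerSection_of_forall_exists_pow_eq⟩

/-- Let `A` be a DVR with residue characteristic `p` and `B` a flat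
`A`-algebra, complete with respect to `I = 𝔭_A B`, whose reduction `B ⧸ I` is a perfect
ring of characteristic `p`.  Then there is a multiplicative section `s : B ⧸ I → B` of the
reduction map such that for every `x`, `s x` is the unique lift of `x` admitting
`p ^ m`-th roots in `B` for all `m`. -/
theorem statement1 (p : ℕ) [Fact p.Prime]
    (A : Type) [CommRing A] [IsDomain A] [IsDiscreteValuationRing A]
    (B : Type) [CommRing B] [Algebra A B] [Module.Flat A B]
    (I : Ideal B) (hI : I = (maximalIdeal A).map (algebraMap A B))
    [IsAdicComplete I B] [CharP (B ⧸ I) p]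
    (hperf : Function.Bijective (fun x : B ⧸ I => x ^ p)) :
    ∃ s : B ⧸ I → B,
      (∀ x : B ⧸ I, Ideal.Quotient.mk I (s x) = x) ∧
      (∀ (x : B ⧸ I) (m : ℕ), ∃ y : B, y ^ p ^ m = s x) ∧
      (∀ x y : B ⧸ I, s (x * y) = s x * s y) ∧
      (∀ (x : B ⧸ I) (b : B),
        Ideal.Quotient.mk I b = x → (∀ m : ℕ, ∃ y : B, y ^ p ^ m = b) → b = s x) :=
  statement1_general p B I hperf
end

section
/- Let A be a discrete valuation ring with residue characteristic p and let B be a flat A-algebra, complete with respect to p_A·B, with B/p_A·B a perfect F_p-algebra. If B/p_A·B is a noetherian ring, then B is noetherian. -/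
/-!
Write `𝔭_A B = (π)`. For an ideal `J` of `B` the colon ideals `(J : πⁿ)` increase with `n`, so
their images in the noetherian ring `B/π` stabilise from some `N` on, each generated by the images of finitely many elements of `(J : πⁿ)`. The products `πⁿ b` with
`n ≤ N` and `b` among these lifts generate an ideal `S ⊆ J` such that every `y ∈ J ∩ πᵐB` lies in
`π^(m-N) S + J ∩ π^(m+1)B`; successive approximation in the `π`-adically complete ring `B` then
gives `J = S`.
-/

section
variable {R : Type*} [CommRing R] {I : Ideal R}

theorem Ideal.smul_top_eq_self (J : Ideal R) : (J • ⊤ : Submodule R R) = J := by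
  rw [smul_eq_mul, mul_top]

theorem IsPrecomplete.exists_sub_mem_pow [IsPrecomplete I R] (N : ℕ) {x : ℕ → R}
    (hx : ∀ m, x (m + 1) - x m ∈ I ^ (m - N)) : ∃ L, ∀ m, L - x m ∈ I ^ (m - N) := by
  have hcauchy : ∀ m n, m ≤ n → x n - x m ∈ I ^ (m - N) := by
    intro m n hmn
    induction n, hmn using Nat.le_induction with
    | base => simp
    | succ n hmn ih =>
      rw [← sub_add_sub_cancel]
      exact add_mem (Ideal.pow_le_pow_right (by omega) (hx n)) ih
  obtain ⟨L, hL⟩ := IsPrecomplete.prec ‹_› (f := fun m => x (m + N)) fun {m n} hmn => by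
    rw [SModEq.sub_mem, Ideal.smul_top_eq_self, ← neg_mem_iff, neg_sub]
    simpa using hcauchy (m + N) (n + N) (by omega)
  refine ⟨L, fun m => ?_⟩
  obtain hm | hm := le_or_gt m N
  · simp [Nat.sub_eq_zero_of_le hm]
  · obtain ⟨n, rfl⟩ := Nat.exists_eq_add_of_le' hm.le
    have := hL n
    rw [SModEq.sub_mem, Ideal.smul_top_eq_self, ← neg_mem_iff, neg_sub] at this
    simpa using this

theorem Ideal.exists_seq_sub_sum_mem_pow {ι : Type*} [Fintype ι] {g : ι → R} {J : Ideal R}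
    (hgJ : ∀ i, g i ∈ J) (N : ℕ)
    (happrox : ∀ m, ∀ y ∈ J, y ∈ I ^ m →
      ∃ c : ι → R, (∀ i, c i ∈ I ^ (m - N)) ∧ y - ∑ i, c i * g i ∈ I ^ (m + 1))
    {y₀ : R} (hy₀ : y₀ ∈ J) :
    ∃ t : ℕ → ι → R, (∀ m i, t (m + 1) i - t m i ∈ I ^ (m - N)) ∧
      ∀ m, y₀ - ∑ i, t m i * g i ∈ I ^ m := by
  have hcoeff : ∀ m y, ∃ c : ι → R, (∀ i, c i ∈ I ^ (m - N)) ∧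
      (y ∈ J → y ∈ I ^ m → y - ∑ i, c i * g i ∈ I ^ (m + 1)) := by
    intro m y
    by_cases hy : y ∈ J ∧ y ∈ I ^ m
    · obtain ⟨c, hc, hyc⟩ := happrox m y hy.1 hy.2
      exact ⟨c, hc, fun _ _ => hyc⟩
    · exact ⟨0, fun _ => zero_mem _, fun hyJ hym => absurd ⟨hyJ, hym⟩ hy⟩
  choose c hcI hc using hcoeff
  let r : ℕ → R := fun m => Nat.rec y₀ (fun m r => r - ∑ i, c m r i * g i) m
  have hr : ∀ m, r m ∈ J ∧ r m ∈ I ^ m := by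
    intro m
    induction m with
    | zero => exact ⟨hy₀, by simp⟩
    | succ m ih =>
      exact ⟨sub_mem ih.1 (J.sum_mem fun i _ => J.mul_mem_left _ (hgJ i)), hc m _ ih.1 ih.2⟩
  let t : ℕ → ι → R := fun m i => ∑ j ∈ Finset.range m, c j (r j) i
  have hrt : ∀ m, r m = y₀ - ∑ i, t m i * g i := by
    intro m
    induction m with
    | zero => simp [r, t]
    | succ m ih =>
      simp only [r, t, Finset.sum_range_succ, add_mul, Finset.sum_add_distrib] at ih ⊢
      rw [ih]
      ring
  refine ⟨t, fun m i => ?_, fun m => hrt m ▸ (hr m).2⟩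
  simpa [t, Finset.sum_range_succ] using hcI m _ i

theorem Ideal.le_of_forall_exists_sub_mem_pow_succ [IsAdicComplete I R] {S J : Ideal R}
    (hS : S.FG) (hSJ : S ≤ J) (N : ℕ)
    (happrox : ∀ m, ∀ y ∈ J, y ∈ I ^ m → ∃ s ∈ I ^ (m - N) * S, y - s ∈ I ^ (m + 1)) :
    J ≤ S := by
  obtain ⟨k, g, rfl⟩ := Submodule.fg_iff_exists_fin_generating_family.mp hS
  intro y₀ hy₀
  obtain ⟨t, ht, hyt⟩ := Ideal.exists_seq_sub_sum_mem_pow (I := I)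
    (fun i => hSJ (subset_span ⟨i, rfl⟩)) N (fun m y hyJ hym => by
      obtain ⟨s, hs, hys⟩ := happrox m y hyJ hym
      rw [← smul_eq_mul, Submodule.mem_ideal_smul_span_iff_exists_sum] at hs
      obtain ⟨c, hc, rfl⟩ := hs
      exact ⟨c, hc, by simpa [Finsupp.sum_fintype] using hys⟩) hy₀
  choose L hL using fun i =>
    IsPrecomplete.exists_sub_mem_pow (I := I) N (x := fun m => t m i) fun m => ht m i
  have hy₀L : y₀ = ∑ i, L i * g i := by
    rw [IsHausdorff.eq_iff_smodEq (I := I)]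
    intro n
    rw [SModEq.sub_mem, Ideal.smul_top_eq_self]
    have hsplit : y₀ - ∑ i, L i * g i =
        (y₀ - ∑ i, t (n + N) i * g i) - ∑ i, (L i - t (n + N) i) * g i := by
      simp only [sub_mul, Finset.sum_sub_distrib]
      ring
    rw [hsplit]
    refine sub_mem (pow_le_pow_right (by omega) (hyt _)) (Ideal.sum_mem _ fun i _ => ?_)
    exact mul_mem_right _ _ (by simpa using hL i (n + N))
  rw [hy₀L]
  exact Ideal.sum_mem _ fun i _ => mul_mem_left _ _ (subset_span ⟨i, rfl⟩)

theorem Ideal.exists_finset_subset_map_span_eq {S : Type*} [CommRing S] {f : R →+* S}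
    (hf : Function.Surjective f) {K : Ideal R} (hK : (K.map f).FG) :
    ∃ T : Finset R, (T : Set R) ⊆ K ∧ (span (T : Set R)).map f = K.map f := by
  classical
  obtain ⟨G, hG⟩ := hK
  have hGK : (G : Set S) ⊆ f '' K := fun g hg =>
    (mem_map_iff_of_surjective f hf).mp (hG ▸ subset_span hg)
  obtain ⟨T, hTK, rfl⟩ := Finset.subset_set_image_iff.mp hGK
  exact ⟨T, hTK, by rw [map_span, ← hG, Finset.coe_image]⟩
end

theorem Ideal.exists_fg_approx_of_isNoetherianRing_quotient {B : Type*} [CommRing B] (π : B)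
    [IsNoetherianRing (B ⧸ Ideal.span {π})] (J : Ideal B) :
    ∃ S : Ideal B, S.FG ∧ S ≤ J ∧ ∃ N : ℕ, ∀ m, ∀ y ∈ J, y ∈ Ideal.span {π} ^ m →
      ∃ s ∈ Ideal.span {π} ^ (m - N) * S, y - s ∈ Ideal.span {π} ^ (m + 1) := by
  set mk := Ideal.Quotient.mk (Ideal.span {π})
  let K : ℕ → Ideal B := fun n => J.colon (Ideal.span {π ^ n})
  have hK : ∀ n b, b ∈ K n ↔ b * π ^ n ∈ J := fun n b => Submodule.mem_colon_span_singleton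
  have hKmono : Monotone fun n => (K n).map mk := monotone_nat_of_le_succ fun n =>
    Ideal.map_mono fun b hb => by
      rw [hK, pow_succ, ← mul_assoc]
      exact J.mul_mem_right _ ((hK n b).mp hb)
  obtain ⟨N, hN⟩ := monotone_stabilizes_iff_noetherian.mpr inferInstance ⟨_, hKmono⟩
  choose T hTK hTmap using fun n => Ideal.exists_finset_subset_map_span_eq
    Ideal.Quotient.mk_surjective (IsNoetherian.noetherian ((K n).map mk))
  let S : Ideal B := ⨆ n : Fin (N + 1), Ideal.span {π ^ (n : ℕ)} * Ideal.span (T n : Set B)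
  have hSfg : S.FG := Submodule.fg_iSup _ fun n =>
    (Submodule.fg_span_singleton _).mul (Submodule.fg_span (T n).finite_toSet)
  have hSJ : S ≤ J := iSup_le fun n => Ideal.span_singleton_mul_le_iff.mpr fun z hz =>
    mul_comm z (π ^ (n : ℕ)) ▸ (hK n z).mp (Ideal.span_le.mpr (hTK n) hz)
  refine ⟨S, hSfg, hSJ, N, fun m y hyJ hym => ?_⟩
  have hpow : ∀ n, Ideal.span {π} ^ n = Ideal.span {π ^ n} := Ideal.span_singleton_pow π
  obtain ⟨d, rfl⟩ := Ideal.mem_span_singleton'.mp (hpow m ▸ hym)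
  set n := min m N
  have hdK : mk d ∈ (Ideal.span (T n : Set B)).map mk := by
    have hKmn : (K m).map mk ≤ (K n).map mk := by
      rcases le_total m N with h | h
      · simp [n, min_eq_left h]
      · rw [show n = N from min_eq_right h]
        exact (hN m h).ge
    rw [hTmap]
    exact hKmn (Ideal.mem_map_of_mem mk ((hK m d).mpr hyJ))
  obtain ⟨u, hu, hud⟩ := (Ideal.mem_map_iff_of_surjective mk Ideal.Quotient.mk_surjective).mp hdK
  obtain ⟨e, he⟩ := Ideal.mem_span_singleton'.mp (Ideal.Quotient.eq.mp hud.symm)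
  refine ⟨π ^ (m - n) * (π ^ n * u), Ideal.mul_mem_mul ?_ ?_, ?_⟩
  · exact Ideal.pow_le_pow_right (by omega) (hpow _ ▸ Ideal.mem_span_singleton_self _)
  · exact Ideal.mem_iSup_of_mem (⟨n, by omega⟩ : Fin (N + 1))
      (Ideal.mul_mem_mul (Ideal.mem_span_singleton_self _) hu)
  · rw [hpow, Ideal.mem_span_singleton']
    refine ⟨e, ?_⟩
    rw [← mul_assoc, pow_sub_mul_pow π (min_le_left m N)]
    linear_combination π ^ m * he

theorem isNoetherianRing_of_isAdicComplete_span_singleton {B : Type*} [CommRing B] (π : B)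
    [IsAdicComplete (Ideal.span {π}) B] [IsNoetherianRing (B ⧸ Ideal.span {π})] :
    IsNoetherianRing B := by
  refine (isNoetherianRing_iff_ideal_fg B).mpr fun J => ?_
  obtain ⟨S, hSfg, hSJ, N, happrox⟩ := Ideal.exists_fg_approx_of_isNoetherianRing_quotient π J
  exact le_antisymm (Ideal.le_of_forall_exists_sub_mem_pow_succ hSfg hSJ N happrox) hSJ ▸ hSfg

open IsLocalRing

theorem statement3_general
    (A : Type) [CommRing A] [IsDomain A] [IsDiscreteValuationRing A]
    (B : Type) [CommRing B] [Algebra A B]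
    (I : Ideal B) (hI : I = (maximalIdeal A).map (algebraMap A B))
    [IsAdicComplete I B]
    (hnoeth : IsNoetherianRing (B ⧸ I)) :
    IsNoetherianRing B := by
  obtain ⟨ϖ, hϖ⟩ := IsDiscreteValuationRing.exists_irreducible A
  obtain rfl : I = Ideal.span {algebraMap A B ϖ} := by
    rw [hI, hϖ.maximalIdeal_eq, Ideal.map_span, Set.image_singleton]
  exact isNoetherianRing_of_isAdicComplete_span_singleton (algebraMap A B ϖ)

/-- Let `A` be a DVR with residue characteristic `p` and `B` a flat
`A`-algebra, complete with respect to `I = 𝔭_A B`, with perfect reduction `B ⧸ I` of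
characteristic `p`.  If the reduction `B ⧸ I` is noetherian, then `B` is noetherian. -/
theorem statement3 (p : ℕ) [Fact p.Prime]
    (A : Type) [CommRing A] [IsDomain A] [IsDiscreteValuationRing A]
    (B : Type) [CommRing B] [Algebra A B] [Module.Flat A B]
    (I : Ideal B) (hI : I = (maximalIdeal A).map (algebraMap A B))
    [IsAdicComplete I B] [CharP (B ⧸ I) p]
    (hperf : Function.Bijective (fun x : B ⧸ I => x ^ p))
    (hnoeth : IsNoetherianRing (B ⧸ I)) :
    IsNoetherianRing B :=
  statement3_general A B I hI hnoeth
end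

section
/- Let A be a discrete valuation ring with residue characteristic p and let B be a flat A-algebra, complete with respect to p_A·B, with B/p_A·B perfect. If B/p_A·B is an integral domain, then B is an integral domain. -/
open IsLocalRing

/-!
Choose a uniformizer `π` of `A`; its image `ϖ` in `B` generates `𝔭_A B` and is a non-zero-divisor
by flatness. Since `B` is `ϖ`-adically separated, every nonzero `a : B` factors as `ϖ ^ m * a'`
with `ϖ ∤ a'`. If `a * b = 0` with `a, b ≠ 0`, cancelling the power of `ϖ` gives `a' * b' = 0`,
so `ϖ` divides `a'` or `b'` because `(ϖ)` is prime, a contradiction.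
-/

theorem finiteMultiplicity_of_isHausdorff_span_singleton {R : Type*} [CommRing R] {x a : R}
    [IsHausdorff (Ideal.span {x}) R] (ha : a ≠ 0) : FiniteMultiplicity x a := by
  by_contra hinf
  refine ha (IsHausdorff.haus ‹_› a fun n => SModEq.zero.mpr ?_)
  simpa [Ideal.span_singleton_pow, Ideal.mem_span_singleton] using
    FiniteMultiplicity.not_iff_forall.mp hinf n

theorem isDomain_of_isDomain_quotient_span_singleton {R : Type*} [CommRing R] {x : R}
    (hx : IsLeftRegular x) [IsHausdorff (Ideal.span {x}) R]
    [IsDomain (R ⧸ Ideal.span {x})] : IsDomain R := by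
  have hprime : (Ideal.span {x}).IsPrime := (Ideal.Quotient.isDomain_iff_prime _).mp ‹_›
  have : Nontrivial R := (Ideal.Quotient.mk (Ideal.span {x})).domain_nontrivial
  have : NoZeroDivisors R := by
    refine ⟨fun {a b} hab => ?_⟩
    by_contra! hne
    have hfin {c : R} (hc : c ≠ 0) : FiniteMultiplicity x c :=
      finiteMultiplicity_of_isHausdorff_span_singleton hc
    obtain ⟨a', ha, ha'⟩ := (hfin hne.1).exists_eq_pow_mul_and_not_dvd
    obtain ⟨b', hb, hb'⟩ := (hfin hne.2).exists_eq_pow_mul_and_not_dvd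
    have hab' : a' * b' = 0 := by
      refine (hx.pow (multiplicity x a + multiplicity x b)) ?_
      linear_combination hab - x ^ multiplicity x b * b' * ha - a * hb
    have hmem : a' * b' ∈ Ideal.span {x} := hab' ▸ Ideal.zero_mem _
    rcases hprime.mem_or_mem hmem with h | h <;>
      rw [Ideal.mem_span_singleton] at h
    exacts [ha' h, hb' h]
  exact NoZeroDivisors.to_isDomain R

theorem statement4_general
    (A : Type) [CommRing A] [IsDomain A] [IsDiscreteValuationRing A]
    (B : Type) [CommRing B] [Algebra A B] [Module.Flat A B]
    (I : Ideal B) (hI : I = (maximalIdeal A).map (algebraMap A B))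
    [IsAdicComplete I B]
    (hdom : IsDomain (B ⧸ I)) :
    IsDomain B := by
  obtain ⟨π, hπ⟩ := IsDiscreteValuationRing.exists_irreducible A
  have hIspan : I = Ideal.span {algebraMap A B π} := by
    rw [hI, (IsDiscreteValuationRing.irreducible_iff_uniformizer π).mp hπ, Ideal.map_span,
      Set.image_singleton]
  subst hIspan
  have hreg : IsLeftRegular (algebraMap A B π) :=
    ((IsSMulRegular.of_ne_zero hπ.ne_zero).of_flat (S := B)).isLeftRegular
  exact isDomain_of_isDomain_quotient_span_singleton hreg

/-- Let `A` be a DVR with residue characteristic `p` and `B` a flat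
`A`-algebra, complete with respect to `I = 𝔭_A B`, with perfect reduction `B ⧸ I` of
characteristic `p`.  If the reduction `B ⧸ I` is an integral domain, then `B` is an integral domain. -/
theorem statement4 (p : ℕ) [Fact p.Prime]
    (A : Type) [CommRing A] [IsDomain A] [IsDiscreteValuationRing A]
    (B : Type) [CommRing B] [Algebra A B] [Module.Flat A B]
    (I : Ideal B) (hI : I = (maximalIdeal A).map (algebraMap A B))
    [IsAdicComplete I B] [CharP (B ⧸ I) p]
    (hperf : Function.Bijective (fun x : B ⧸ I => x ^ p))
    (hdom : IsDomain (B ⧸ I)) :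
    IsDomain B :=
  statement4_general A B I hI hdom
end

section
/- Let Q ⊆ A be an extension of discrete valuation rings of ramification index one with Q residually perfect and A/Q formally smooth, let T ⊂ A be a lift of a p-basis of the residue field of A, let B be a Q-algebra complete with respect to an ideal I containing the image of the maximal ideal of Q, and let φ': A → B/I^n be a Q-algebra map for some n ≥ 1. Then for any choice of lifts x_t ∈ B of φ'(t) for t ∈ T, there exists a unique Q-algebra homomorphism φ: A → B with φ ≡ φ' (mod I^n) and φ(t) = x_t for all t ∈ T. -/
open IsLocalRing TensorProduct

/-!
Lifts of a map `A → C'` along a surjection `C → C'` with square-zero kernel `J` exist by formal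
smoothness and form a torsor under `Der_Q(A, J)`. When `𝔪_Q` kills `J`, so does `𝔪_A = 𝔪_Q A`,
hence `Der_Q(A, J) = Hom_k(k ⊗ Ω¹_{A/Q}, J) ≅ J^T` through the `p`-basis: exactly one lift takes
prescribed values on `T`. Along the tower `B ⧸ I ^ (m + 1) → B ⧸ I ^ m`, `m ≥ n`, this yields a
unique compatible family of lifts of `φ'`, and its limit in the `I`-adically complete `B` is `φ`.
-/

theorem Derivation.bijective_restrict_of_basis_D {Q A ι : Type*} [CommRing Q] [CommRing A]
    [IsLocalRing A] [Algebra Q A] (s : ι → A)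
    (b : Module.Basis ι (ResidueField A) (ResidueField A ⊗[A] Ω[A⁄Q]))
    (hb : ∀ i, b i = 1 ⊗ₜ KaehlerDifferential.D Q A (s i))
    {M : Type*} [AddCommGroup M] [Module A M] [Module Q M] [IsScalarTower Q A M]
    (hM : Module.IsTorsionBySet A M (maximalIdeal A)) :
    Function.Bijective fun (d : Derivation Q A M) i ↦ d (s i) := by
  let _ : Module (ResidueField A) M := hM.module
  have : IsScalarTower A (ResidueField A) M := hM.isScalarTower
  let e := (KaehlerDifferential.linearMapEquivDerivation Q A).symm.toEquiv.trans <|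
    (LinearMap.liftBaseChangeEquiv (ResidueField A)).toEquiv.trans
      (b.constr (M' := M) (ResidueField A)).symm.toEquiv
  convert e.bijective using 1
  funext d i
  simp [e, Module.Basis.constr_symm_apply, hb]

section SquareZero

variable {Q A C ι : Type*} [CommRing Q] [CommRing A] [IsLocalRing A] [CommRing C]
  [Algebra Q A] [Algebra Q C]

theorem existsUnique_lift_of_sq_eq_bot [Algebra A C] [IsScalarTower Q A C] (s : ι → A)
    (b : Module.Basis ι (ResidueField A) (ResidueField A ⊗[A] Ω[A⁄Q]))
    (hb : ∀ i, b i = 1 ⊗ₜ KaehlerDifferential.D Q A (s i))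
    (J : Ideal C) (hJ2 : J ^ 2 = ⊥) (hJ : Module.IsTorsionBySet A J (maximalIdeal A))
    (w : ι → C) (hw : ∀ i, w i - algebraMap A C (s i) ∈ J) :
    ∃! φ : A →ₐ[Q] C, (Ideal.Quotient.mkₐ Q J).comp φ = IsScalarTower.toAlgHom Q A (C ⧸ J) ∧
      ∀ i, φ (s i) = w i := by
  let E := derivationToSquareZeroEquivLift (R := Q) (A := A) J hJ2
  obtain ⟨d, hd, hd_unique⟩ := (Derivation.bijective_restrict_of_basis_D s b hb hJ).existsUnique
    fun i ↦ ⟨w i - algebraMap A C (s i), hw i⟩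
  refine ⟨E d, ⟨(E d).2, fun i ↦ ?_⟩, fun φ ⟨hφ, hφs⟩ ↦ ?_⟩
  · simp [E, congrFun hd i]
  · have : E.symm ⟨φ, hφ⟩ = d := hd_unique _ <| funext fun i ↦ Subtype.ext <| by
      simp [E, hφs]
    rw [← this, E.apply_symm_apply]

theorem existsUnique_lift_of_surjective [Algebra.FormallySmooth Q A] (s : ι → A)
    (b : Module.Basis ι (ResidueField A) (ResidueField A ⊗[A] Ω[A⁄Q]))
    (hb : ∀ i, b i = 1 ⊗ₜ KaehlerDifferential.D Q A (s i))
    (𝔮 : Ideal Q) (h𝔮 : 𝔮.map (algebraMap Q A) = maximalIdeal A)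
    {C' : Type*} [CommRing C'] [Algebra Q C'] (π : C →ₐ[Q] C') (hπ : Function.Surjective π)
    (hker : RingHom.ker π ^ 2 = ⊥) (h𝔮ker : 𝔮.map (algebraMap Q C) * RingHom.ker π = ⊥)
    (ψ : A →ₐ[Q] C') (w : ι → C) (hw : ∀ i, π (w i) = ψ (s i)) :
    ∃! φ : A →ₐ[Q] C, π.comp φ = ψ ∧ ∀ i, φ (s i) = w i := by
  let χ := Algebra.FormallySmooth.liftOfSurjective ψ π hπ ⟨2, hker⟩
  let _ : Algebra A C := χ.toAlgebra
  have : IsScalarTower Q A C := .of_algebraMap_eq' χ.comp_algebraMap.symm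
  have hπχ (a : A) : π (algebraMap A C a) = ψ a :=
    Algebra.FormallySmooth.liftOfSurjective_apply ψ π hπ _ a
  have hlift (φ : A →ₐ[Q] C) : π.comp φ = ψ ↔
      (Ideal.Quotient.mkₐ Q (RingHom.ker π)).comp φ = IsScalarTower.toAlgHom Q A _ := by
    simp only [AlgHom.ext_iff, AlgHom.comp_apply, IsScalarTower.coe_toAlgHom',
      Ideal.Quotient.mkₐ_eq_mk, ← Ideal.Quotient.mk_algebraMap, Ideal.Quotient.eq,
      RingHom.mem_ker, map_sub, sub_eq_zero, hπχ]
  have htors : Module.IsTorsionBySet A (RingHom.ker π) (maximalIdeal A) := by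
    rintro z ⟨a, ha⟩
    have : algebraMap A C a ∈ 𝔮.map (algebraMap Q C) := by
      rw [← h𝔮] at ha
      simpa [Ideal.map_map, ← IsScalarTower.algebraMap_eq] using
        Ideal.mem_map_of_mem (algebraMap A C) ha
    ext
    simpa [Algebra.smul_def, h𝔮ker] using Ideal.mul_mem_mul this z.2
  rw [existsUnique_congr fun φ ↦ and_congr_left' (hlift φ)]
  exact existsUnique_lift_of_sq_eq_bot s b hb _ hker htors w fun i ↦ by
    rw [RingHom.mem_ker, map_sub, hw, hπχ, sub_self]

end SquareZero

section AdicTower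

variable {Q A B ι : Type*} [CommRing Q] [CommRing A] [CommRing B] [Algebra Q A] [Algebra Q B]

theorem Ideal.map_mk_pow_sq_eq_bot (I : Ideal B) {m : ℕ} (hm : 1 ≤ m) :
    (I ^ m).map (Ideal.Quotient.mk (I ^ (m + 1))) ^ 2 = ⊥ := by
  rw [← Ideal.map_pow, ← pow_mul]
  exact Ideal.map_mk_eq_bot_of_le (Ideal.pow_le_pow_right (by omega))

theorem Ideal.map_mk_mul_map_mk_pow_eq_bot (I : Ideal B) (m : ℕ) :
    I.map (Ideal.Quotient.mk (I ^ (m + 1))) * (I ^ m).map (Ideal.Quotient.mk (I ^ (m + 1))) =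
      ⊥ := by
  rw [← Ideal.map_mul, ← pow_succ']
  exact Ideal.map_mk_eq_bot_of_le le_rfl

theorem existsUnique_lift_mod_pow [IsLocalRing A] [Algebra.FormallySmooth Q A] (s : ι → A)
    (b : Module.Basis ι (ResidueField A) (ResidueField A ⊗[A] Ω[A⁄Q]))
    (hb : ∀ i, b i = 1 ⊗ₜ KaehlerDifferential.D Q A (s i))
    (𝔮 : Ideal Q) (h𝔮 : 𝔮.map (algebraMap Q A) = maximalIdeal A)
    (I : Ideal B) (hI : 𝔮.map (algebraMap Q B) ≤ I) {n : ℕ} (hn : 1 ≤ n)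
    (φ' : A →ₐ[Q] B ⧸ I ^ n) (x : ι → B)
    (hx : ∀ i, Ideal.Quotient.mk (I ^ n) (x i) = φ' (s i)) (m : ℕ) (hm : n ≤ m) :
    ∃! ψ : A →ₐ[Q] B ⧸ I ^ m,
      (Ideal.Quotient.factorₐ Q (Ideal.pow_le_pow_right hm)).comp ψ = φ' ∧
        ∀ i, ψ (s i) = Ideal.Quotient.mk (I ^ m) (x i) := by
  induction m, hm using Nat.le_induction with
  | base =>
    simp only [Ideal.Quotient.factorₐ_refl, AlgHom.id_comp]
    exact ⟨φ', ⟨rfl, fun i ↦ (hx i).symm⟩, fun ψ h ↦ h.1⟩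
  | succ m hnm ih =>
    obtain ⟨ψ, ⟨hψ, hψs⟩, hψ_unique⟩ := ih
    let π := Ideal.Quotient.factorₐ Q (Ideal.pow_le_pow_right (I := I) (m.le_add_right 1))
    have hker : RingHom.ker π = (I ^ m).map (Ideal.Quotient.mk (I ^ (m + 1))) :=
      Ideal.Quotient.factor_ker (Ideal.pow_le_pow_right (m.le_add_right 1))
    have h𝔮ker : 𝔮.map (algebraMap Q (B ⧸ I ^ (m + 1))) * RingHom.ker π = ⊥ := by
      refine le_bot_iff.mp ?_
      rw [hker, ← Ideal.map_mk_mul_map_mk_pow_eq_bot I m, IsScalarTower.algebraMap_eq Q B,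
        Ideal.Quotient.algebraMap_eq, ← Ideal.map_map]
      exact Ideal.mul_mono_left (Ideal.map_mono hI)
    refine (existsUnique_congr fun φ ↦ ?_).mp <|
      existsUnique_lift_of_surjective s b hb 𝔮 h𝔮 π
        (Ideal.Quotient.factor_surjective (Ideal.pow_le_pow_right (m.le_add_right 1)))
        (hker ▸ Ideal.map_mk_pow_sq_eq_bot I (hn.trans hnm)) h𝔮ker ψ
        (fun i ↦ Ideal.Quotient.mk _ (x i)) fun i ↦ by simp [π, hψs]
    constructor
    · rintro ⟨hφ, hφs⟩
      refine ⟨?_, hφs⟩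
      rw [← Ideal.Quotient.factorₐ_comp Q (Ideal.pow_le_pow_right (m.le_add_right 1))
        (Ideal.pow_le_pow_right hnm), AlgHom.comp_assoc, hφ, hψ]
    · rintro ⟨hφ, hφs⟩
      refine ⟨hψ_unique _ ⟨?_, fun i ↦ by simp [π, hφs]⟩, hφs⟩
      rwa [← AlgHom.comp_assoc, Ideal.Quotient.factorₐ_comp]

theorem IsAdicComplete.existsUnique_algHom_of_existsUnique_mod_pow (I : Ideal B)
    [IsAdicComplete I B] {n : ℕ} (φ' : A →ₐ[Q] B ⧸ I ^ n) (s : ι → A) (x : ι → B)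
    (h : ∀ m (hm : n ≤ m), ∃! ψ : A →ₐ[Q] B ⧸ I ^ m,
      (Ideal.Quotient.factorₐ Q (Ideal.pow_le_pow_right hm)).comp ψ = φ' ∧
        ∀ i, ψ (s i) = Ideal.Quotient.mk (I ^ m) (x i)) :
    ∃! φ : A →ₐ[Q] B, (Ideal.Quotient.mkₐ Q (I ^ n)).comp φ = φ' ∧ ∀ i, φ (s i) = x i := by
  simp only [ExistsUnique, and_assoc] at h
  choose ψ hψ hψs hψ_unique using h
  have hψ_compat (k l : ℕ) (hk : n ≤ k) (hkl : k ≤ l) :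
      (Ideal.Quotient.factorₐ Q (Ideal.pow_le_pow_right hkl)).comp (ψ l (hk.trans hkl)) =
        ψ k hk :=
    hψ_unique k hk _ ⟨by rw [← AlgHom.comp_assoc, Ideal.Quotient.factorₐ_comp, hψ],
      fun i ↦ by simp [hψs]⟩
  have hψ_of_lift (φ : A →ₐ[Q] B)
      (hφ : (Ideal.Quotient.mkₐ Q (I ^ n)).comp φ = φ' ∧ ∀ i, φ (s i) = x i) (m : ℕ)
      (hm : n ≤ m) : (Ideal.Quotient.mkₐ Q (I ^ m)).comp φ = ψ m hm :=
    hψ_unique m hm _ ⟨by rw [← AlgHom.comp_assoc, Ideal.Quotient.factorₐ_comp_mk, hφ.1],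
      fun i ↦ by simp [hφ.2]⟩
  let f (m : ℕ) : A →ₐ[Q] B ⧸ I ^ m :=
    (Ideal.Quotient.factorₐ Q (Ideal.pow_le_pow_right (m.le_add_right n))).comp
      (ψ (m + n) (n.le_add_left m))
  have hf {m m' : ℕ} (hle : m ≤ m') :
      (Ideal.Quotient.factorₐ Q (Ideal.pow_le_pow_right hle)).comp (f m') = f m := by
    simp only [f]
    rw [← hψ_compat (m + n) (m' + n) _ (by omega), ← AlgHom.comp_assoc, ← AlgHom.comp_assoc,
      Ideal.Quotient.factorₐ_comp, Ideal.Quotient.factorₐ_comp]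
  let φ := IsAdicComplete.liftAlgHom I f hf
  have hφ (m : ℕ) : (Ideal.Quotient.mkₐ Q (I ^ m)).comp φ = f m :=
    IsAdicComplete.mkₐ_comp_liftAlgHom I f hf m
  refine ⟨φ, ⟨?_, fun i ↦ ?_⟩, fun φ₂ h₂ ↦ IsAdicComplete.algHom_ext I fun m ↦ ?_⟩
  · exact (hφ n).trans (hψ _ _)
  · refine congrFun (IsHausdorff.funext' I (f := φ ∘ s) (g := x) fun m i ↦ ?_) i
    simp [φ, f, hψs]
  · rw [hφ, ← Ideal.Quotient.factorₐ_comp_mk Q (Ideal.pow_le_pow_right (m.le_add_right n)),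
      AlgHom.comp_assoc, hψ_of_lift φ₂ h₂]

end AdicTower

theorem statement6_general
    (Q : Type) [CommRing Q] [IsDomain Q] [IsDiscreteValuationRing Q]
    (A : Type) [CommRing A] [IsDomain A] [IsDiscreteValuationRing A]
    [Algebra Q A]
    (he : (maximalIdeal Q).map (algebraMap Q A) = maximalIdeal A)
    [Algebra.FormallySmooth Q A]
    (T : Set A)
    (bT : Module.Basis T (ResidueField A) (ResidueField A ⊗[A] Ω[A⁄Q]))
    (hbT : ∀ t : T, bT t = (1 : ResidueField A) ⊗ₜ[A] (KaehlerDifferential.D Q A (t : A)))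
    (B : Type) [CommRing B] [Algebra Q B]
    (I : Ideal B) [IsAdicComplete I B]
    (hIm : (maximalIdeal Q).map (algebraMap Q B) ≤ I)
    (n : ℕ) (hn : 1 ≤ n)
    (φ' : A →ₐ[Q] B ⧸ (I ^ n))
    (x : T → B) (hx : ∀ t : T, Ideal.Quotient.mk (I ^ n) (x t) = φ' (t : A)) :
    ∃! φ : A →ₐ[Q] B,
      (Ideal.Quotient.mkₐ Q (I ^ n)).comp φ = φ' ∧ ∀ t : T, φ (t : A) = x t :=
  IsAdicComplete.existsUnique_algHom_of_existsUnique_mod_pow I φ' _ x <|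
    existsUnique_lift_mod_pow _ bT hbT (maximalIdeal Q) he I hIm hn φ' x hx

/-- Let `Q ⊆ A` be an extension of DVRs of ramification index one with `Q`
residually perfect (so `A / Q` is formally smooth), let `T ⊂ A` be a lift of a `p`-basis
of the residue field `k` of `A` (i.e. the classes `1 ⊗ dt`, `t ∈ T`, form a `k`-basis of
`k ⊗_A Ω¹_{A/Q}`), let `B` be a `Q`-algebra complete with respect to an ideal `I`
containing the image of the maximal ideal of `Q`, and let `φ' : A → B ⧸ I ^ n` be a
`Q`-algebra map, `n ≥ 1`.  Then for any choice of lifts `x t ∈ B` of `φ' t` (`t ∈ T`)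
there is a unique `Q`-algebra homomorphism `φ : A → B` reducing to `φ'` modulo `I ^ n`
with `φ t = x t` for all `t ∈ T`. -/
theorem statement6 (p : ℕ) [Fact p.Prime]
    (Q : Type) [CommRing Q] [IsDomain Q] [IsDiscreteValuationRing Q]
    [CharP (ResidueField Q) p]
    (hQperf : Function.Bijective (fun x : ResidueField Q => x ^ p))
    (A : Type) [CommRing A] [IsDomain A] [IsDiscreteValuationRing A]
    [Algebra Q A] (hinj : Function.Injective (algebraMap Q A))
    (he : (maximalIdeal Q).map (algebraMap Q A) = maximalIdeal A)
    [Algebra.FormallySmooth Q A]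
    (T : Set A)
    (bT : Module.Basis T (ResidueField A) (ResidueField A ⊗[A] Ω[A⁄Q]))
    (hbT : ∀ t : T, bT t = (1 : ResidueField A) ⊗ₜ[A] (KaehlerDifferential.D Q A (t : A)))
    (B : Type) [CommRing B] [Algebra Q B]
    (I : Ideal B) [IsAdicComplete I B]
    (hIm : (maximalIdeal Q).map (algebraMap Q B) ≤ I)
    (n : ℕ) (hn : 1 ≤ n)
    (φ' : A →ₐ[Q] B ⧸ (I ^ n))
    (x : T → B) (hx : ∀ t : T, Ideal.Quotient.mk (I ^ n) (x t) = φ' (t : A)) :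
    ∃! φ : A →ₐ[Q] B,
      (Ideal.Quotient.mkₐ Q (I ^ n)).comp φ = φ' ∧ ∀ t : T, φ (t : A) = x t :=
  statement6_general Q A he T bT hbT B I hIm n hn φ' x hx
end

section
/- Let C be a complete discrete valuation ring of mixed characteristic (0,p) with absolute ramification index one, let g(X) ∈ C[X] be an Eisenstein polynomial, let W be the ring of Witt vectors of a perfect F_p-algebra S equipped with a ring map C → W, and let h be the image of g in W[[π̃]] under a continuous map C[X] → W[[π̃]] sending X to π̃. Then π̃ is not a zero-divisor in W[[π̃]]/(h). -/
/-!
Since `g` is Eisenstein and `p` generates the maximal ideal of `C`, `g 0` is a unit or `p` times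
a unit. As `p` is not a zero-divisor in the Witt vectors of a perfect ring, neither is the
constant coefficient `f (g 0)` of `h`. If `X Q = h r` in `W⟦X⟧`, comparing constant coefficients
gives `h 0 · r 0 = 0`, so `r 0 = 0`, `r = X r'`, and cancelling `X` yields `Q = h r'`.
-/

open IsLocalRing nonZeroDivisors

theorem WittVector.p_mem_nonZeroDivisors {p : ℕ} [Fact p.Prime] {k : Type*} [CommRing k]
    [CharP k p] [PerfectRing k p] : (p : WittVector p k) ∈ (WittVector p k)⁰ :=
  mem_nonZeroDivisors_iff_right.2 WittVector.eq_zero_of_p_mul_eq_zero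

namespace IsLocalRing

variable {R : Type*} [CommRing R] [IsLocalRing R] {ϖ x : R}

theorem exists_isUnit_of_notMem_maximalIdeal_sq (hϖ : maximalIdeal R = Ideal.span {ϖ})
    (hx : x ∉ maximalIdeal R ^ 2) : ∃ u : R, IsUnit u ∧ (x = u ∨ x = ϖ * u) := by
  by_cases hxm : x ∈ maximalIdeal R
  · rw [hϖ, Ideal.mem_span_singleton'] at hxm
    obtain ⟨u, rfl⟩ := hxm
    refine ⟨u, notMem_maximalIdeal.1 fun hu => hx ?_, Or.inr (mul_comm _ _)⟩
    rw [sq]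
    exact Ideal.mul_mem_mul hu (hϖ ▸ Ideal.mem_span_singleton_self ϖ)
  · exact ⟨x, notMem_maximalIdeal.1 hxm, Or.inl rfl⟩

theorem map_mem_nonZeroDivisors_of_notMem_maximalIdeal_sq {A : Type*} [CommRing A]
    (f : R →+* A) (hϖ : maximalIdeal R = Ideal.span {ϖ}) (hfϖ : f ϖ ∈ A⁰)
    (hx : x ∉ maximalIdeal R ^ 2) : f x ∈ A⁰ := by
  obtain ⟨u, hu, rfl | rfl⟩ := exists_isUnit_of_notMem_maximalIdeal_sq hϖ hx
  · exact (hu.map f).mem_nonZeroDivisors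
  · rw [map_mul]
    exact mul_mem hfϖ (hu.map f).mem_nonZeroDivisors

end IsLocalRing

namespace PowerSeries

theorem mk_X_mem_nonZeroDivisors {R : Type*} [CommRing R] {h : PowerSeries R}
    (hh : constantCoeff h ∈ R⁰) :
    Ideal.Quotient.mk (Ideal.span {h}) X ∈ (PowerSeries R ⧸ Ideal.span {h})⁰ := by
  refine mem_nonZeroDivisors_iff_right.2 fun q hq => ?_
  obtain ⟨Q, rfl⟩ := Ideal.Quotient.mk_surjective q
  rw [← map_mul, Ideal.Quotient.eq_zero_iff_mem, Ideal.mem_span_singleton'] at hq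
  obtain ⟨r, hr⟩ := hq
  have hr0 : constantCoeff r = 0 := by
    have := congrArg constantCoeff hr
    rw [map_mul, map_mul, constantCoeff_X, mul_zero] at this
    exact (mul_right_mem_nonZeroDivisors_eq_zero_iff hh).1 this
  obtain ⟨r', rfl⟩ := X_dvd_iff.2 hr0
  rw [Ideal.Quotient.eq_zero_iff_mem, Ideal.mem_span_singleton']
  exact ⟨r', X_mul_cancel (by rw [mul_comm X Q, ← hr]; ring)⟩

end PowerSeries

theorem statement7_general (p : ℕ) [Fact p.Prime]
    (C : Type) [CommRing C] [IsDomain C] [IsDiscreteValuationRing C]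
    (habs : maximalIdeal C = Ideal.span {(p : C)})
    (g : Polynomial C) (hEis : g.IsEisensteinAt (maximalIdeal C))
    (S : Type) [CommRing S] [CharP S p]
    (hperf : Function.Bijective (fun x : S => x ^ p))
    (f : C →+* WittVector p S) :
    ∀ q : PowerSeries (WittVector p S) ⧸
        Ideal.span {((g.map f : Polynomial (WittVector p S)) : PowerSeries (WittVector p S))},
      Ideal.Quotient.mk _ PowerSeries.X * q = 0 → q = 0 := by
  have : PerfectRing S p := ⟨hperf⟩
  have hh0 : PowerSeries.constantCoeff ((g.map f : Polynomial (WittVector p S)) :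
      PowerSeries (WittVector p S)) ∈ (WittVector p S)⁰ := by
    rw [Polynomial.constantCoeff_coe, Polynomial.coeff_map]
    refine map_mem_nonZeroDivisors_of_notMem_maximalIdeal_sq f habs ?_ hEis.notMem
    rw [map_natCast]
    exact WittVector.p_mem_nonZeroDivisors
  intro q hq
  have hX := PowerSeries.mk_X_mem_nonZeroDivisors hh0
  exact (mul_left_mem_nonZeroDivisors_eq_zero_iff hX).1 hq

/-- Let `C` be a complete DVR of mixed characteristic `(0, p)` with absolute
ramification index one, `g ∈ C[X]` an Eisenstein polynomial, `S` a perfect `𝔽_p`-algebra,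
`W = W(S)` its ring of `p`-typical Witt vectors, and `f : C → W` a ring map.  Let
`h ∈ W[[π̃]]` be the image of `g` under the map `C[X] → W[[π̃]]`, `X ↦ π̃`.  Then `π̃` is
not a zero-divisor in `W[[π̃]] ⧸ (h)`. -/
theorem statement7 (p : ℕ) [Fact p.Prime]
    (C : Type) [CommRing C] [IsDomain C] [IsDiscreteValuationRing C] [CharZero C]
    [IsAdicComplete (maximalIdeal C) C]
    (habs : maximalIdeal C = Ideal.span {(p : C)})
    (g : Polynomial C) (hmonic : g.Monic) (hEis : g.IsEisensteinAt (maximalIdeal C))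
    (S : Type) [CommRing S] [CharP S p]
    (hperf : Function.Bijective (fun x : S => x ^ p))
    (f : C →+* WittVector p S) :
    ∀ q : PowerSeries (WittVector p S) ⧸
        Ideal.span {((g.map f : Polynomial (WittVector p S)) : PowerSeries (WittVector p S))},
      Ideal.Quotient.mk _ PowerSeries.X * q = 0 → q = 0 :=
  statement7_general p C habs g hEis S hperf f
end

section
/- Let A be a complete discrete valuation ring with residue characteristic p, and let B be a finite étale extension of A. If C is a flat A-algebra complete with respect to p_A·C with perfect reduction, then C ⊗_A B is a flat B-algebra complete with respect to p_B·(C⊗_A B) with perfect reduction. In particular a finite étale base change of an object of crp(A) is an object of crp(B). -/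
/-!
Since `B` is finite free over `A`, `B ⊗[A] C ≅ C ^ n` as `A`-modules, so completeness passes from
`C` to the base change, and the reduction of `B ⊗[A] C` is `R ⊗[A] B` with `R = C ⧸ 𝔪_A C` perfect.
As `𝔪_A B = 𝔪_B` and the residue extension is separable, `B` is spanned over `A` by `p`-th powers
modulo `𝔪_A B`; this makes Frobenius of `R ⊗[A] B` surjective. Being semilinear over the bijective
Frobenius of `R` on the finite free `R`-module `R ⊗[A] B`, it is then injective as well.
-/

open IsLocalRing

/-- The category `crp(A)`: `B` is a flat `A`-algebra, complete with respect to `𝔭_A B`,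
whose reduction `B ⧸ 𝔭_A B` is a perfect ring of characteristic `p`. -/
def IsCrp (p : ℕ) (A : Type) [CommRing A] [IsDomain A] [IsDiscreteValuationRing A]
    (B : Type) [CommRing B] [Algebra A B] : Prop :=
  Module.Flat A B ∧
  IsAdicComplete ((maximalIdeal A).map (algebraMap A B)) B ∧
  CharP (B ⧸ (maximalIdeal A).map (algebraMap A B)) p ∧
  Function.Bijective (fun x : B ⧸ (maximalIdeal A).map (algebraMap A B) => x ^ p)

open scoped TensorProduct

open TensorProduct

namespace IsAdicComplete

variable {R : Type*} [CommRing R] {I : Ideal R} {M N : Type*} [AddCommGroup M] [Module R M]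
  [AddCommGroup N] [Module R N]

theorem of_linearEquiv [IsAdicComplete I M] (e : M ≃ₗ[R] N) : IsAdicComplete I N := by
  rw [← AdicCompletion.of_bijective_iff]
  have hof : ⇑(AdicCompletion.of I N) =
      AdicCompletion.congr I e ∘ AdicCompletion.of I M ∘ e.symm := by
    ext x
    simp [AdicCompletion.map_of]
  rw [hof]
  exact (AdicCompletion.congr I e).bijective.comp
    ((AdicCompletion.of_bijective I M).comp e.symm.bijective)

instance pi {ι : Type*} [Finite ι] (M : ι → Type*) [∀ i, AddCommGroup (M i)]
    [∀ i, Module R (M i)] [∀ i, IsAdicComplete I (M i)] : IsAdicComplete I (∀ i, M i) := by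
  classical
  have := Fintype.ofFinite ι
  rw [← AdicCompletion.of_bijective_iff]
  have hof : ⇑(AdicCompletion.of I (∀ i, M i)) =
      (AdicCompletion.piEquivOfFintype I M).symm ∘ Pi.map fun i ↦ AdicCompletion.of I (M i) := by
    funext x
    rw [Function.comp_apply, LinearEquiv.eq_symm_apply]
    funext i
    rw [AdicCompletion.piEquivOfFintype_apply, AdicCompletion.pi, LinearMap.pi_apply,
      AdicCompletion.map_of]
    rfl
  rw [hof]
  exact (AdicCompletion.piEquivOfFintype I M).symm.bijective.comp
    (.piMap fun i ↦ AdicCompletion.of_bijective I (M i))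

theorem tensorProduct_of_free [Module.Free R N] [Module.Finite R N] [IsAdicComplete I M] :
    IsAdicComplete I (N ⊗[R] M) :=
  let b := Module.Free.chooseBasis R N
  of_linearEquiv ((TensorProduct.congr b.repr (.refl R M)).trans
    ((finsuppScalarLeft R M _).trans (Finsupp.linearEquivFunOnFinite R M _))).symm

end IsAdicComplete

theorem PerfectRing.of_ringEquiv {Q D : Type*} [CommSemiring Q] [CommSemiring D] (e : Q ≃+* D)
    (p : ℕ) [PerfectRing D p] : PerfectRing Q p := by
  have hpow : (fun x : Q ↦ x ^ p) = e.symm ∘ (fun y : D ↦ y ^ p) ∘ e := by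
    ext x
    simp
  exact ⟨hpow ▸ e.symm.bijective.comp (PerfectRing.bijective_frobenius.comp e.bijective)⟩

/-- In coordinates `x = ∑ xᵢ bᵢ` one has `x ^ p = ∑ xᵢ ^ p bᵢ ^ p`: Frobenius is the `R`-linear map
`bᵢ ↦ bᵢ ^ p` after the bijection `(xᵢ) ↦ (xᵢ ^ p)`, and a surjective endomorphism of a finite
module is injective. -/
theorem PerfectRing.of_surjective_frobenius {R D : Type*} [CommRing R] [CommRing D] [Algebra R D]
    [Module.Free R D] [Module.Finite R D] (p : ℕ) [ExpChar R p] [PerfectRing R p] [ExpChar D p]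
    (h : Function.Surjective (frobenius D p)) : PerfectRing D p := by
  let b := Module.Free.chooseBasis R D
  let τ : D ≃ D := b.equivFun.toEquiv.trans
    ((Equiv.piCongrRight fun _ ↦ (frobeniusEquiv R p).toEquiv).trans b.equivFun.symm.toEquiv)
  let L : D →ₗ[R] D := b.constr R fun i ↦ b i ^ p
  have hτ (x : D) : b.equivFun (τ x) = fun i ↦ b.equivFun x i ^ p := by
    simp only [τ, Equiv.trans_apply, LinearEquiv.coe_toEquiv, LinearEquiv.apply_symm_apply]
    rfl
  have hfrob : ⇑(frobenius D p) = L ∘ τ := by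
    ext x
    conv_lhs => rw [← b.sum_equivFun x]
    simp only [map_sum, frobenius_def, smul_pow, Function.comp_apply, L,
      Module.Basis.constr_apply_fintype, hτ]
  have hL : Function.Surjective L := by
    rw [hfrob] at h
    exact h.of_comp
  have hLinj : Function.Injective L := OrzechProperty.injective_of_surjective_endomorphism L hL
  refine ⟨?_, h⟩
  rw [show (fun x : D ↦ x ^ p) = L ∘ τ from hfrob]
  exact hLinj.comp τ.injective

/-- The image of Frobenius is an `R`-subalgebra of `R ⊗[A] B`, containing `1 ⊗ b ^ p` and
`1 ⊗ a • b = 0` for `a ∈ I`. -/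
theorem surjective_frobenius_tensorProduct_of_span_pow {A R B : Type*} [CommRing A] [CommRing R]
    [CommRing B] [Algebra A R] [Algebra A B] (p : ℕ) [ExpChar R p] [ExpChar (R ⊗[A] B) p]
    {I : Ideal A} (hI : I ≤ RingHom.ker (algebraMap A R)) (hR : Function.Surjective (frobenius R p))
    (hB : Submodule.span A (Set.range fun b : B ↦ b ^ p) ⊔ I • ⊤ = ⊤) :
    Function.Surjective (frobenius (R ⊗[A] B) p) := by
  let T : Subalgebra R (R ⊗[A] B) :=
    { (frobenius (R ⊗[A] B) p).rangeS with
      algebraMap_mem' r := by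
        obtain ⟨s, rfl⟩ := hR r
        exact ⟨algebraMap R _ s, by simp [frobenius_def]⟩ }
  let N : Submodule A B :=
    (Subalgebra.toSubmodule T).restrictScalars A |>.comap
      (Algebra.TensorProduct.includeRight : B →ₐ[A] R ⊗[A] B).toLinearMap
  have hN : N = ⊤ := by
    refine eq_top_iff.2 (hB ▸ sup_le ?_ ?_)
    · rw [Submodule.span_le]
      rintro _ ⟨b, rfl⟩
      exact ⟨1 ⊗ₜ b, by simp [frobenius_def, Algebra.TensorProduct.tmul_pow]⟩
    · refine Submodule.smul_le.2 fun a ha b _ ↦ ?_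
      show (1 : R) ⊗ₜ[A] (a • b) ∈ T
      rw [← smul_tmul, Algebra.smul_def, hI ha, zero_mul, zero_tmul]
      exact zero_mem T
  intro x
  suffices x ∈ T from this
  induction x using TensorProduct.induction_on with
  | zero => exact zero_mem T
  | tmul r b =>
    have hb : (1 : R) ⊗ₜ[A] b ∈ T := (hN.symm ▸ Submodule.mem_top : b ∈ N)
    simpa [smul_tmul'] using T.smul_mem hb r
  | add x y hx hy => exact add_mem hx hy

theorem span_pow_sup_maximalIdeal_smul_eq_top {A B : Type*} [CommRing A] [CommRing B]
    [IsLocalRing A] [IsLocalRing B] [Algebra A B] [IsLocalHom (algebraMap A B)]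
    (p : ℕ) [ExpChar (ResidueField A) p] [Algebra.IsSeparable (ResidueField A) (ResidueField B)]
    (he : (maximalIdeal A).map (algebraMap A B) = maximalIdeal B) :
    Submodule.span A (Set.range fun b : B ↦ b ^ p) ⊔ maximalIdeal A • ⊤ = ⊤ := by
  let f : B →ₗ[A] ResidueField B := (IsScalarTower.toAlgHom A B (ResidueField B)).toLinearMap
  have hker : LinearMap.ker f = maximalIdeal A • ⊤ := by
    rw [Ideal.smul_top_eq_map, he]
    ext b
    simp [f, residue_eq_zero_iff]
  have hspan : (Submodule.span A (Set.range fun b : B ↦ b ^ p)).map f = ⊤ := by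
    have hpow : Submodule.span (ResidueField A) (Set.range fun y : ResidueField B ↦ y ^ p) = ⊤ := by
      simpa using Field.span_map_pow_expChar_pow_eq_top_of_isSeparable p 1
        (v := id) (F := ResidueField A) (by simp)
    have hrange : f '' Set.range (fun b : B ↦ b ^ p) = Set.range fun y : ResidueField B ↦ y ^ p := by
      rw [← Set.range_comp, ← residue_surjective.range_comp]
      rfl
    rw [Submodule.map_span, hrange, ← Submodule.restrictScalars_span A (ResidueField A)
      residue_surjective, hpow, Submodule.restrictScalars_top]
  rw [← hker, ← Submodule.comap_map_eq, hspan, Submodule.comap_top]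

theorem charP_residueField_of_charP_quotient {A : Type*} (C : Type*) [CommRing A] [IsLocalRing A]
    [CommRing C] [Algebra A C] (p : ℕ) [Fact p.Prime]
    [CharP (C ⧸ (maximalIdeal A).map (algebraMap A C)) p] : CharP (ResidueField A) p :=
  have := CharP.nontrivial_of_char_ne_one (R := C ⧸ (maximalIdeal A).map (algebraMap A C))
    (Fact.out : p.Prime).ne_one
  let f : ResidueField A →+* C ⧸ (maximalIdeal A).map (algebraMap A C) :=
    Ideal.quotientMap _ (algebraMap A C) Ideal.le_comap_map
  f.charP f.injective p

noncomputable def tensorProductQuotientMapEquiv (A B C : Type*) [CommRing A] [CommRing B]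
    [CommRing C] [Algebra A B] [Algebra A C] (I : Ideal A) :
    ((B ⊗[A] C) ⧸ I.map (algebraMap A (B ⊗[A] C))) ≃ₐ[A] (C ⧸ I.map (algebraMap A C)) ⊗[A] B :=
  have hI : I.map (algebraMap A (B ⊗[A] C)) =
      (I.map (algebraMap A C)).map (Algebra.TensorProduct.includeRight (R := A) (A := B)) := by
    rw [← AlgHom.comp_algebraMap Algebra.TensorProduct.includeRight, ← Ideal.map_map]
    rfl
  (Ideal.quotientEquivAlgOfEq A hI).trans
    ((Algebra.TensorProduct.tensorQuotientEquiv (R := A) A C B _).symm.trans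
      (Algebra.TensorProduct.comm A B _))

theorem statement12_general (p : ℕ) [Fact p.Prime]
    (A : Type) [CommRing A] [IsDomain A] [IsDiscreteValuationRing A]
    (B : Type) [CommRing B] [IsDomain B] [IsDiscreteValuationRing B]
    [Algebra A B] [Module.Finite A B]
    (hinj : Function.Injective (algebraMap A B))
    [IsLocalHom (algebraMap A B)]
    (he : (maximalIdeal A).map (algebraMap A B) = maximalIdeal B)
    [Algebra.IsSeparable (ResidueField A) (ResidueField B)]
    (C : Type) [CommRing C] [Algebra A C] (hC : IsCrp p A C) :
    IsCrp p B (B ⊗[A] C) := by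
  obtain ⟨hflat, hcomplete, hchar, hperf⟩ := hC
  have : FaithfulSMul A B := (faithfulSMul_iff_algebraMap_injective A B).2 hinj
  have hJ : (maximalIdeal B).map (algebraMap B (B ⊗[A] C)) =
      (maximalIdeal A).map (algebraMap A (B ⊗[A] C)) := by
    rw [← he, Ideal.map_map, ← IsScalarTower.algebraMap_eq]
  let R := C ⧸ (maximalIdeal A).map (algebraMap A C)
  have : PerfectRing R p := ⟨hperf⟩
  have : CharP (ResidueField A) p := charP_residueField_of_charP_quotient C p
  have : CharP (R ⊗[A] B) p := charP_of_injective_algebraMap' R p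
  have : PerfectRing (R ⊗[A] B) p :=
    .of_surjective_frobenius (R := R) p <| surjective_frobenius_tensorProduct_of_span_pow p
      (fun a ha ↦ Ideal.Quotient.eq_zero_iff_mem.2 (Ideal.mem_map_of_mem _ ha))
      (surjective_frobenius R p) (span_pow_sup_maximalIdeal_smul_eq_top p he)
  let e := (tensorProductQuotientMapEquiv A B C (maximalIdeal A)).toRingEquiv
  refine ⟨Module.Flat.baseChange A B C, ?_, ?_, ?_⟩ <;> rw [hJ]
  · rw [IsAdicComplete.map_algebraMap_iff] at hcomplete ⊢
    exact IsAdicComplete.tensorProduct_of_free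
  · exact charP_of_injective_ringHom (f := e.symm.toRingHom) e.symm.injective p
  · exact (PerfectRing.of_ringEquiv e p).bijective_frobenius

/-- Let `A` be a complete DVR with residue characteristic `p` and `B` a
finite étale extension of `A` (a finite extension of DVRs of ramification index one with
separable residue extension).  If `C` is an object of `crp(A)` (a flat `A`-algebra,
complete with respect to `𝔭_A C`, with perfect reduction), then the base change
`B ⊗_A C` is an object of `crp(B)`. -/
theorem statement12 (p : ℕ) [Fact p.Prime]
    (A : Type) [CommRing A] [IsDomain A] [IsDiscreteValuationRing A]
    [IsAdicComplete (maximalIdeal A) A]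
    (B : Type) [CommRing B] [IsDomain B] [IsDiscreteValuationRing B]
    [Algebra A B] [Module.Finite A B]
    (hinj : Function.Injective (algebraMap A B))
    [IsLocalHom (algebraMap A B)]
    (he : (maximalIdeal A).map (algebraMap A B) = maximalIdeal B)
    [Algebra.IsSeparable (ResidueField A) (ResidueField B)]
    (C : Type) [CommRing C] [Algebra A C] (hC : IsCrp p A C) :
    IsCrp p B (B ⊗[A] C) :=
  statement12_general p A B hinj he C hC
end

section
/- Let A be a complete discrete valuation ring with residue characteristic p, Λ a field of characteristic ≠ p, and ρ: G → Aut(V) a representation of the Galois group G of a finite generically Galois, monogenic extension B/A on a finite-dimensional Λ-vector space V. Define G_i = ker(G → Aut(B/m_B^{i+1})) and ar_B(ρ) = e_{B/A}^{-1} Σ_{i≥0} |G_i|·codim V^{G_i}. If B ⊗_A A^g is a discrete valuation ring with ramification index e over B, then G_i = G'_{ei} = ⋯ = G'_{ei+e-1} for all i ≥ 0, where G'_j are the ramification groups of (B ⊗_A A^g)/A^g, and consequently ar_B(ρ) = ar_{B⊗_A A^g}(ρ|_{A^g}). -/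
open IsLocalRing

/-- `Au` is a universal residual perfection of `A`: an initial object of `crp(A)`. -/
def IsUniversalRP (p : ℕ) (A : Type) [CommRing A] [IsDomain A] [IsDiscreteValuationRing A]
    (Au : Type) [CommRing Au] [Algebra A Au] : Prop :=
  IsCrp p A Au ∧
  ∀ (B : Type) (_ : CommRing B) (_ : Algebra A B), IsCrp p A B →
    ∃! _f : Au →ₐ[A] B, True

/-- `Ag` is a generic residual perfection of `A`: an object of `crp(A)` whose reduction is
a field, namely the fraction field of the reduction of a universal residual perfection
`Au` of `A` (via the canonical map `Au → Ag`). -/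
def IsGenericRP (p : ℕ) (A : Type) [CommRing A] [IsDomain A] [IsDiscreteValuationRing A]
    (Ag : Type) [CommRing Ag] [Algebra A Ag] : Prop :=
  IsCrp p A Ag ∧
  IsField (Ag ⧸ (maximalIdeal A).map (algebraMap A Ag)) ∧
  ∃ (Au : Type) (_ : CommRing Au) (_ : Algebra A Au),
    IsUniversalRP p A Au ∧
    ∃ f : Au →ₐ[A] Ag,
      (∀ a : Au, f a ∈ (maximalIdeal A).map (algebraMap A Ag) →
        a ∈ (maximalIdeal A).map (algebraMap A Au)) ∧
      (∀ y : Ag, ∃ a b : Au,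
        f b ∉ (maximalIdeal A).map (algebraMap A Ag) ∧
        y * f b - f a ∈ (maximalIdeal A).map (algebraMap A Ag))


open scoped TensorProduct

/-- `σ` lies in the `i`-th ramification group (lower numbering) of the local `R`-algebra
`B`:  `σ` acts trivially on `B ⧸ 𝔪_B ^ (i + 1)`. -/
def InRam (R B : Type) [CommRing R] [CommRing B] [IsLocalRing B] [Algebra R B]
    (i : ℕ) (σ : B ≃ₐ[R] B) : Prop :=
  ∀ x : B, σ x - x ∈ (maximalIdeal B) ^ (i + 1)

/-- The subspace of vectors fixed by all group elements satisfying a predicate `P`. -/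
def fixedSub (Λ V G : Type) [Field Λ] [AddCommGroup V] [Module Λ V] [Group G]
    (ρ : G →* (V ≃ₗ[Λ] V)) (P : G → Prop) : Submodule Λ V where
  carrier := {v | ∀ σ : G, P σ → ρ σ v = v}
  add_mem' := by
    intro a b ha hb σ h
    rw [map_add, ha σ h, hb σ h]
  zero_mem' := by
    intro σ h
    exact map_zero _
  smul_mem' := by
    intro c v hv σ h
    rw [map_smul, hv σ h]

/-- The codimension of the subspace of vectors fixed by all elements satisfying `P`. -/
noncomputable def codimFixed (Λ V G : Type) [Field Λ] [AddCommGroup V] [Module Λ V]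
    [Group G] (ρ : G →* (V ≃ₗ[Λ] V)) (P : G → Prop) : ℕ :=
  Module.finrank Λ V - Module.finrank Λ (fixedSub Λ V G ρ P)

/-- The naive Artin conductor `ar_B(ρ) = e⁻¹ Σ_{i ≥ 0} |G_i| · codim V^{G_i}`, where the
ramification groups are computed via a (bijective) identification `θ` of the abstract
group `G` with the automorphism group of the local `R`-algebra `B`, and `e` is the
ramification index of `B` over the base. -/
noncomputable def naiveArtin (Λ V G : Type) [Field Λ] [AddCommGroup V] [Module Λ V]
    [Group G] (ρ : G →* (V ≃ₗ[Λ] V))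
    (R B : Type) [CommRing R] [CommRing B] [IsLocalRing B] [Algebra R B]
    (θ : G → (B ≃ₐ[R] B)) (e : ℕ) : ℝ :=
  (e : ℝ)⁻¹ * ∑' i : ℕ,
    (Nat.card {σ : G // InRam R B i (θ σ)} : ℝ) *
      (codimFixed Λ V G ρ (fun σ => InRam R B i (θ σ)) : ℝ)

/-!
Since `D = A^g ⊗_A B` has ramification index `e` over `B`, the ideal `𝔪_B^(i+1)` extends to
`𝔪_D^(e(i+1))`, and an element of `B` lying in `𝔪_D^(ei+1)` already lies in `𝔪_B^(i+1)`.
As `D` is generated by `B` over `A^g`, the automorphism `1 ⊗ σ` moves `D` into the extension of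
the ideal into which `σ` moves `B`. Together, `σ ∈ G_i` iff `1 ⊗ σ ∈ G'_j` for every
`ei ≤ j < e(i+1)`, i.e. `G'_j = G_{⌊j/e⌋}`. In the conductor of `D` each term of the conductor
of `B` thus appears `e` times, which is compensated by `e_{D/A^g} = e · e_{B/A}`, a consequence
of `𝔪_A A^g = 𝔪_{A^g}`.
-/

namespace IsDiscreteValuationRing

variable {R : Type*} [CommRing R] [IsDomain R] [IsDiscreteValuationRing R]

theorem pow_maximalIdeal_le_pow_iff {a b : ℕ} :
    IsLocalRing.maximalIdeal R ^ a ≤ IsLocalRing.maximalIdeal R ^ b ↔ b ≤ a := by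
  rw [← idealOrderIsoENat_symm_apply_coe, ← idealOrderIsoENat_symm_apply_coe,
    OrderIso.le_iff_le]
  exact Nat.cast_le (α := ℕ∞)

theorem pow_maximalIdeal_injective :
    Function.Injective (IsLocalRing.maximalIdeal R ^ · : ℕ → Ideal R) :=
  fun _ _ h => le_antisymm (pow_maximalIdeal_le_pow_iff.mp h.ge)
    (pow_maximalIdeal_le_pow_iff.mp h.le)

theorem mem_maximalIdeal_pow_succ_of_map_mem {S : Type*} [CommRing S] [IsDomain S]
    [IsDiscreteValuationRing S] {f : R →+* S} {e : ℕ}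
    (hf : (IsLocalRing.maximalIdeal R).map f = IsLocalRing.maximalIdeal S ^ e) {x : R} {n : ℕ}
    (hx : f x ∈ IsLocalRing.maximalIdeal S ^ (e * n + 1)) :
    x ∈ IsLocalRing.maximalIdeal R ^ (n + 1) := by
  rcases eq_or_ne x 0 with rfl | hx0
  · exact zero_mem _
  obtain ⟨ϖ, hϖ⟩ := exists_irreducible R
  obtain ⟨k, hk⟩ := ideal_eq_span_pow_irreducible (Ideal.span_singleton_eq_bot.not.mpr hx0) hϖ
  rw [← Ideal.span_singleton_pow, ← hϖ.maximalIdeal_eq] at hk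
  have hfx : Ideal.span {f x} = IsLocalRing.maximalIdeal S ^ (e * k) := by
    rw [← Set.image_singleton, ← Ideal.map_span, hk, Ideal.map_pow, hf, ← pow_mul]
  rw [← Ideal.span_singleton_le_iff_mem, hfx, pow_maximalIdeal_le_pow_iff] at hx
  rw [← Ideal.span_singleton_le_iff_mem, hk, pow_maximalIdeal_le_pow_iff]
  exact Nat.lt_of_mul_lt_mul_left hx

end IsDiscreteValuationRing

theorem Algebra.TensorProduct.congr_refl_apply_sub_mem_map {R S B : Type*} [CommRing R]
    [CommRing S] [CommRing B] [Algebra R S] [Algebra R B] {σ : B ≃ₐ[R] B} {I : Ideal B}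
    (hσ : ∀ b, σ b - b ∈ I) (y : S ⊗[R] B) :
    (congr (AlgEquiv.refl (A₁ := S)) σ : S ⊗[R] B ≃ₐ[S] S ⊗[R] B) y - y ∈
      I.map (includeRight : B →ₐ[R] S ⊗[R] B).toRingHom := by
  induction y using TensorProduct.induction_on with
  | zero => simp
  | tmul s b =>
    have hsb : (congr (AlgEquiv.refl (A₁ := S)) σ : S ⊗[R] B ≃ₐ[S] S ⊗[R] B) (s ⊗ₜ b) -
        s ⊗ₜ b = (s ⊗ₜ 1) * includeRight (σ b - b) := by
      simp [mul_sub, TensorProduct.tmul_sub]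
    rw [hsb]
    exact Ideal.mul_mem_left _ _ (Ideal.mem_map_of_mem _ (hσ b))
  | add u v hu hv =>
    rw [map_add, add_sub_add_comm]
    exact Ideal.add_mem _ hu hv

theorem inRam_iff_inRam_baseChange {A Ag B : Type} [CommRing A] [CommRing Ag] [Algebra A Ag]
    [CommRing B] [IsDomain B] [IsDiscreteValuationRing B] [Algebra A B]
    [IsDomain (Ag ⊗[A] B)] [IsDiscreteValuationRing (Ag ⊗[A] B)] {e : ℕ}
    (heB : (maximalIdeal B).map
        ((Algebra.TensorProduct.includeRight : B →ₐ[A] Ag ⊗[A] B).toRingHom) =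
      (maximalIdeal (Ag ⊗[A] B)) ^ e)
    (σ : B ≃ₐ[A] B) {i r : ℕ} (hr : r < e) :
    InRam A B i σ ↔
      InRam Ag (Ag ⊗[A] B) (e * i + r)
        (Algebra.TensorProduct.congr (AlgEquiv.refl (A₁ := Ag)) σ) := by
  constructor
  · intro h y
    have hle : ((maximalIdeal B) ^ (i + 1)).map
        (Algebra.TensorProduct.includeRight : B →ₐ[A] Ag ⊗[A] B).toRingHom ≤
        maximalIdeal (Ag ⊗[A] B) ^ (e * i + r + 1) := by
      rw [Ideal.map_pow, heB, ← pow_mul]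
      exact Ideal.pow_le_pow_right (by rw [Nat.mul_succ]; omega)
    exact hle (Algebra.TensorProduct.congr_refl_apply_sub_mem_map h y)
  · intro h x
    have hx : (Algebra.TensorProduct.includeRight : B →ₐ[A] Ag ⊗[A] B).toRingHom (σ x - x) ∈
        maximalIdeal (Ag ⊗[A] B) ^ (e * i + r + 1) := by
      simpa [TensorProduct.tmul_sub] using h (1 ⊗ₜ x)
    exact IsDiscreteValuationRing.mem_maximalIdeal_pow_succ_of_map_mem heB
      (Ideal.pow_le_pow_right (by omega : e * i + 1 ≤ e * i + r + 1) hx)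

-- Both sides are `0` when `f` is not summable.
theorem tsum_comp_div_eq_mul_tsum (f : ℕ → ℝ) {e : ℕ} (he : 0 < e) :
    ∑' j, f (j / e) = e * ∑' i, f i := by
  have : NeZero e := ⟨he.ne'⟩
  by_cases hf : Summable f
  · have hdiv : ∀ p : ℕ × Fin e, (Nat.divModEquiv e).symm p / e = p.1 := fun p => by
      simp [Nat.divModEquiv, Nat.add_div_of_dvd_right (Dvd.intro_left _ rfl), p.2.isLt, he]
    have hprod := tsum_mul_tsum_of_summable_norm hf.norm
      (Summable.of_finite (f := fun _ : Fin e => ‖(1 : ℝ)‖))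
    rw [← (Nat.divModEquiv e).symm.tsum_eq, mul_comm]
    simp only [hdiv]
    simpa using hprod.symm
  · have hdiv : ¬Summable fun j => f (j / e) := fun h => hf <| by
      simpa [Function.comp_def, Nat.mul_div_cancel_left _ he] using
        h.comp_injective (mul_right_injective₀ he.ne')
    rw [tsum_eq_zero_of_not_summable hf, tsum_eq_zero_of_not_summable hdiv, mul_zero]

theorem naiveArtin_eq_of_inRam_iff {Λ V G : Type} [Field Λ] [AddCommGroup V] [Module Λ V]
    [Group G] (ρ : G →* (V ≃ₗ[Λ] V)) {R B R' B' : Type} [CommRing R] [CommRing B]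
    [IsLocalRing B] [Algebra R B] [CommRing R'] [CommRing B'] [IsLocalRing B'] [Algebra R' B']
    (θ : G → (B ≃ₐ[R] B)) (θ' : G → (B' ≃ₐ[R'] B')) {e : ℕ} (he : 0 < e)
    (h : ∀ σ j, InRam R' B' j (θ' σ) ↔ InRam R B (j / e) (θ σ)) (f : ℕ) :
    naiveArtin Λ V G ρ R' B' θ' (e * f) = naiveArtin Λ V G ρ R B θ f := by
  unfold naiveArtin
  simp only [h]
  rw [tsum_comp_div_eq_mul_tsum (fun i => (Nat.card {σ : G // InRam R B i (θ σ)} : ℝ) *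
    codimFixed Λ V G ρ (fun σ => InRam R B i (θ σ))) he, Nat.cast_mul, mul_inv,
    mul_comm (e : ℝ)⁻¹, mul_assoc, inv_mul_cancel_left₀ (by positivity)]

theorem mul_eq_mul_of_map_maximalIdeal {A B C D : Type*} [CommRing A] [IsLocalRing A]
    [CommRing B] [IsLocalRing B] [CommRing C] [IsLocalRing C]
    [CommRing D] [IsDomain D] [IsDiscreteValuationRing D]
    {f : A →+* B} {g : B →+* D} {h : A →+* C} {k : C →+* D} (hcomm : g.comp f = k.comp h)
    {a b c d : ℕ} (hf : (maximalIdeal A).map f = maximalIdeal B ^ a)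
    (hg : (maximalIdeal B).map g = maximalIdeal D ^ b)
    (hh : (maximalIdeal A).map h = maximalIdeal C ^ c)
    (hk : (maximalIdeal C).map k = maximalIdeal D ^ d) :
    b * a = d * c := by
  refine IsDiscreteValuationRing.pow_maximalIdeal_injective (R := D) ?_
  simp only [pow_mul]
  rw [← hg, ← hk, ← Ideal.map_pow, ← Ideal.map_pow, ← hf, ← hh, Ideal.map_map, Ideal.map_map,
    hcomm]

theorem IsGenericRP.map_maximalIdeal {p : ℕ} {A Ag : Type} [CommRing A] [IsDomain A]
    [IsDiscreteValuationRing A] [CommRing Ag] [IsLocalRing Ag] [Algebra A Ag]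
    (hAg : IsGenericRP p A Ag) :
    (maximalIdeal A).map (algebraMap A Ag) = maximalIdeal Ag :=
  IsLocalRing.eq_maximalIdeal (Ideal.Quotient.maximal_of_isField _ hAg.2.1)

theorem statement16_general (p : ℕ)
    (A : Type) [CommRing A] [IsDomain A] [IsDiscreteValuationRing A]
    (Λ : Type) [Field Λ]
    (V : Type) [AddCommGroup V] [Module Λ V]
    (Ag : Type) [CommRing Ag] [IsDomain Ag] [IsDiscreteValuationRing Ag] [Algebra A Ag]
    (hAg : IsGenericRP p A Ag)
    (B : Type) [CommRing B] [IsDomain B] [IsDiscreteValuationRing B]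
    [Algebra A B]
    (ρ : (B ≃ₐ[A] B) →* (V ≃ₗ[Λ] V))
    [IsDomain (Ag ⊗[A] B)] [IsDiscreteValuationRing (Ag ⊗[A] B)]
    (eBA : ℕ)
    (heBA : (maximalIdeal A).map (algebraMap A B) = (maximalIdeal B) ^ eBA)
    (e : ℕ) (he : 1 ≤ e)
    (heB : (maximalIdeal B).map
        ((Algebra.TensorProduct.includeRight : B →ₐ[A] Ag ⊗[A] B).toRingHom) =
      (maximalIdeal (Ag ⊗[A] B)) ^ e)
    (eDA : ℕ)
    (heDA : (maximalIdeal Ag).map (algebraMap Ag (Ag ⊗[A] B)) =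
      (maximalIdeal (Ag ⊗[A] B)) ^ eDA) :
    (∀ (σ : B ≃ₐ[A] B) (i r : ℕ), r < e →
      (InRam A B i σ ↔
        InRam Ag (Ag ⊗[A] B) (e * i + r)
          (Algebra.TensorProduct.congr (AlgEquiv.refl (A₁ := Ag)) σ))) ∧
    naiveArtin Λ V (B ≃ₐ[A] B) ρ A B id eBA =
      naiveArtin Λ V (B ≃ₐ[A] B) ρ Ag (Ag ⊗[A] B)
        (fun σ => Algebra.TensorProduct.congr (AlgEquiv.refl (A₁ := Ag)) σ) eDA := by
  have hram (σ : B ≃ₐ[A] B) (i r : ℕ) (hr : r < e) :=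
    inRam_iff_inRam_baseChange (i := i) heB σ hr
  refine ⟨hram, ?_⟩
  have hcomm : (Algebra.TensorProduct.includeRight : B →ₐ[A] Ag ⊗[A] B).toRingHom.comp
      (algebraMap A B) = (algebraMap Ag (Ag ⊗[A] B)).comp (algebraMap A Ag) := by
    rw [← IsScalarTower.algebraMap_eq A Ag (Ag ⊗[A] B)]
    exact AlgHom.comp_algebraMap (Algebra.TensorProduct.includeRight : B →ₐ[A] Ag ⊗[A] B)
  have hindex : e * eBA = eDA := (mul_eq_mul_of_map_maximalIdeal hcomm heBA heB
    (hAg.map_maximalIdeal.trans (pow_one _).symm) heDA).trans (mul_one eDA)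
  rw [← hindex]
  refine (naiveArtin_eq_of_inRam_iff ρ id _ he (fun σ j => ?_) eBA).symm
  simpa only [Nat.div_add_mod, id_eq] using (hram σ (j / e) (j % e) (Nat.mod_lt j he)).symm

/-- Let `A` be a complete DVR with residue characteristic `p`, `Λ` a field
of characteristic `≠ p`, `B/A` a finite generically Galois monogenic extension with
Galois group `G = (B ≃ₐ[A] B)`, and `ρ` a representation of `G` on a finite-dimensional
`Λ`-vector space `V`.  Suppose `D = Ag ⊗_A B` is a DVR, with ramification index `e`
over `B`.  Then `G_i = G'_{e i} = ⋯ = G'_{e i + e - 1}` for all `i ≥ 0`, where `G'_j`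
are the ramification groups of `D/Ag` (via the base-change identification `σ ↦ 1 ⊗ σ`),
and consequently the naive Artin conductors agree: `ar_B(ρ) = ar_D(ρ|_{Ag})`. -/
theorem statement16 (p : ℕ) [Fact p.Prime]
    (A : Type) [CommRing A] [IsDomain A] [IsDiscreteValuationRing A]
    [IsAdicComplete (maximalIdeal A) A]
    (Λ : Type) [Field Λ] (hchar : ringChar Λ ≠ p)
    (V : Type) [AddCommGroup V] [Module Λ V] [FiniteDimensional Λ V]
    (Ag : Type) [CommRing Ag] [IsDomain Ag] [IsDiscreteValuationRing Ag] [Algebra A Ag]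
    (hAg : IsGenericRP p A Ag)
    (B : Type) [CommRing B] [IsDomain B] [IsDiscreteValuationRing B]
    [Algebra A B] [Module.Finite A B] [IsLocalHom (algebraMap A B)]
    (hinj : Function.Injective (algebraMap A B))
    (K : Type) [Field K] [Algebra A K] [IsFractionRing A K]
    (L : Type) [Field L] [Algebra B L] [IsFractionRing B L]
    [Algebra A L] [IsScalarTower A B L]
    [Algebra K L] [IsScalarTower A K L] [IsGalois K L]
    (hmono : ∃ x : B, Algebra.adjoin A {x} = ⊤)
    (hGal : Nat.card (B ≃ₐ[A] B) = Module.finrank K L)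
    (ρ : (B ≃ₐ[A] B) →* (V ≃ₗ[Λ] V))
    [IsDomain (Ag ⊗[A] B)] [IsDiscreteValuationRing (Ag ⊗[A] B)]
    (eBA : ℕ)
    (heBA : (maximalIdeal A).map (algebraMap A B) = (maximalIdeal B) ^ eBA)
    (e : ℕ) (he : 1 ≤ e)
    (heB : (maximalIdeal B).map
        ((Algebra.TensorProduct.includeRight : B →ₐ[A] Ag ⊗[A] B).toRingHom) =
      (maximalIdeal (Ag ⊗[A] B)) ^ e)
    (eDA : ℕ)
    (heDA : (maximalIdeal Ag).map (algebraMap Ag (Ag ⊗[A] B)) =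
      (maximalIdeal (Ag ⊗[A] B)) ^ eDA) :
    (∀ (σ : B ≃ₐ[A] B) (i r : ℕ), r < e →
      (InRam A B i σ ↔
        InRam Ag (Ag ⊗[A] B) (e * i + r)
          (Algebra.TensorProduct.congr (AlgEquiv.refl (A₁ := Ag)) σ))) ∧
    naiveArtin Λ V (B ≃ₐ[A] B) ρ A B id eBA =
      naiveArtin Λ V (B ≃ₐ[A] B) ρ Ag (Ag ⊗[A] B)
        (fun σ => Algebra.TensorProduct.congr (AlgEquiv.refl (A₁ := Ag)) σ) eDA :=
  statement16_general p A Λ V Ag hAg B ρ eBA heBA e he heB eDA heDA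
end
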